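/- arXiv:1610.03984 — 2 statements merged into one kernel-verified Lean document; each statement's English description precedes it below -/
import Mathlib

section
/- (ε-removal lemma) Let F_a : 𝕋^r → ℂ be measurable with |F_a| ≤ C N^{d/2} ‖a‖₂ pointwise. Suppose (i) for some p ≥ 2K/d and all ε>0, ∫_{𝕋^r} |F_a|^p dm ≤ C_ε N^{dp/2 - K + ε} ‖a‖₂^p, and (ii) for some q > p and ζ ∈ (0, d/2), ∫_{|F_a| ≥ N^{d/2-ζ}‖a‖₂} |F_a|^q dm ≤ C N^{dq/2 - K} ‖a‖₂^q. Then ∫_{𝕋^r} |F_a|^q dm ≲ N^{dq/2 - K} ‖a‖₂^q, with implied constant independent of N and a. -/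
open MeasureTheory

/-- The fundamental domain `[0,1)^r` of the `r`-dimensional torus. -/
def box (r : ℕ) : Set (Fin r → ℝ) := Set.univ.pi fun _ : Fin r => Set.Ico (0 : ℝ) 1

/-- the ε-removal lemma, uniform in `N` and in the sequence `a`
(abstracted by an index `i : ι` with ℓ² norm `na N i`). -/
theorem stmt2 {ι : Type*} (r : ℕ) (d K p q ζ C : ℝ)
    (hd : 0 < d) (hK : 0 < K) (hC : 0 < C)
    (hp : 2 * K / d ≤ p) (hq : p < q) (hζ : ζ ∈ Set.Ioo 0 (d / 2))
    (F : ℕ → ι → (Fin r → ℝ) → ℂ) (na : ℕ → ι → ℝ)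
    (hna : ∀ N i, 0 ≤ na N i)
    (hmeas : ∀ N i, Measurable (F N i))
    (hbd : ∀ N : ℕ, 1 ≤ N → ∀ i x, ‖F N i x‖ ≤ C * (N : ℝ) ^ (d / 2) * na N i)
    (h1 : ∀ ε > 0, ∃ Cε > 0, ∀ N : ℕ, 1 ≤ N → ∀ i,
      (∫ α in box r, ‖F N i α‖ ^ p) ≤ Cε * (N : ℝ) ^ (d * p / 2 - K + ε) * (na N i) ^ p)
    (h2 : ∀ N : ℕ, 1 ≤ N → ∀ i,
      (∫ α in box r ∩ {α | (N : ℝ) ^ (d / 2 - ζ) * na N i ≤ ‖F N i α‖},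
          ‖F N i α‖ ^ q)
        ≤ C * (N : ℝ) ^ (d * q / 2 - K) * (na N i) ^ q) :
    ∃ C' > 0, ∀ N : ℕ, 1 ≤ N → ∀ i,
      (∫ α in box r, ‖F N i α‖ ^ q) ≤ C' * (N : ℝ) ^ (d * q / 2 - K) * (na N i) ^ q := by
  obtain ⟨hζ0, hζd⟩ := hζ
  have hp0 : 0 < p := lt_of_lt_of_le (by positivity) hp
  have hq0 : 0 < q := hp0.trans hq
  have hqp : 0 < q - p := sub_pos.mpr hq
  set ε := (q - p) * ζ / 2 with hεdef
  have hε0 : 0 < ε := by positivity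
  obtain ⟨Cε, hCε, hCb⟩ := h1 ε hε0
  refine ⟨C + Cε, by positivity, fun N hN i => ?_⟩
  have hN1 : (1 : ℝ) ≤ (N : ℝ) := by exact_mod_cast hN
  have hN0 : (0 : ℝ) < (N : ℝ) := lt_of_lt_of_le one_pos hN1
  set S : Set (Fin r → ℝ) := {α | (N : ℝ) ^ (d / 2 - ζ) * na N i ≤ ‖F N i α‖} with hSdef
  have hboxm : MeasurableSet (box r) := MeasurableSet.univ_pi fun _ => measurableSet_Ico
  have hSm : MeasurableSet S := measurableSet_le measurable_const (hmeas N i).norm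
  have hvol : volume (box r) ≠ ⊤ := by
    simp [box, volume_pi_pi]
  -- integrability of ‖F‖ ^ t on box r for nonneg t
  have hint : ∀ t : ℝ, 0 ≤ t → IntegrableOn (fun α => ‖F N i α‖ ^ t) (box r) := by
    intro t ht
    apply Measure.integrableOn_of_bounded (M := (C * (N : ℝ) ^ (d / 2) * na N i) ^ t) hvol
    · exact ((Real.continuous_rpow_const ht).measurable.comp
        (hmeas N i).norm).aestronglyMeasurable
    · filter_upwards with x
      rw [Real.norm_eq_abs, abs_of_nonneg (Real.rpow_nonneg (norm_nonneg _) t)]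
      exact Real.rpow_le_rpow (norm_nonneg _) (hbd N hN i x) ht
  have hsplit : (∫ α in box r ∩ S, ‖F N i α‖ ^ q) + (∫ α in box r \ S, ‖F N i α‖ ^ q)
      = ∫ α in box r, ‖F N i α‖ ^ q := integral_inter_add_diff hSm (hint q hq0.le)
  -- threshold
  set thr : ℝ := (N : ℝ) ^ (d / 2 - ζ) * na N i with hthr
  have hthr0 : 0 ≤ thr := mul_nonneg (Real.rpow_pos_of_pos hN0 _).le (hna N i)
  -- pointwise bound on the complement
  have hpt : ∀ α ∈ box r \ S, ‖F N i α‖ ^ q ≤ thr ^ (q - p) * ‖F N i α‖ ^ p := by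
    intro α hα
    have hlt : ‖F N i α‖ ≤ thr := (not_le.mp hα.2).le
    have e : ‖F N i α‖ ^ q = ‖F N i α‖ ^ p * ‖F N i α‖ ^ (q - p) := by
      rw [← Real.rpow_add_of_nonneg (norm_nonneg _) hp0.le hqp.le]
      norm_num
    rw [e, mul_comm]
    exact mul_le_mul_of_nonneg_right
      (Real.rpow_le_rpow (norm_nonneg _) hlt hqp.le)
      (Real.rpow_nonneg (norm_nonneg _) p)
  -- bound the integral on the complement
  have hb2 : (∫ α in box r \ S, ‖F N i α‖ ^ q)
      ≤ thr ^ (q - p) * ∫ α in box r, ‖F N i α‖ ^ p := by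
    calc (∫ α in box r \ S, ‖F N i α‖ ^ q)
        ≤ ∫ α in box r \ S, thr ^ (q - p) * ‖F N i α‖ ^ p := by
          apply setIntegral_mono_on ((hint q hq0.le).mono_set Set.diff_subset)
            (((hint p hp0.le).mono_set Set.diff_subset).const_mul _)
            (hboxm.diff hSm) hpt
      _ = thr ^ (q - p) * ∫ α in box r \ S, ‖F N i α‖ ^ p := by
          rw [integral_const_mul]
      _ ≤ thr ^ (q - p) * ∫ α in box r, ‖F N i α‖ ^ p := by
          apply mul_le_mul_of_nonneg_left _ (Real.rpow_nonneg hthr0 _)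
          apply setIntegral_mono_set (hint p hp0.le)
            (Filter.Eventually.of_forall fun x => Real.rpow_nonneg (norm_nonneg _) p)
            (HasSubset.Subset.eventuallyLE Set.diff_subset)
  have hb2' : thr ^ (q - p) * (∫ α in box r, ‖F N i α‖ ^ p)
      ≤ Cε * (N : ℝ) ^ (d * q / 2 - K) * (na N i) ^ q := by
    have step : thr ^ (q - p) * (∫ α in box r, ‖F N i α‖ ^ p)
        ≤ thr ^ (q - p) * (Cε * (N : ℝ) ^ (d * p / 2 - K + ε) * (na N i) ^ p) :=
      mul_le_mul_of_nonneg_left (hCb N hN i) (Real.rpow_nonneg hthr0 _)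
    refine step.trans ?_
    have e1 : thr ^ (q - p) = (N : ℝ) ^ ((d / 2 - ζ) * (q - p)) * (na N i) ^ (q - p) := by
      rw [hthr, Real.mul_rpow (Real.rpow_pos_of_pos hN0 _).le (hna N i),
        ← Real.rpow_mul hN0.le]
    rw [e1]
    have e2 : (N : ℝ) ^ ((d / 2 - ζ) * (q - p)) * (na N i) ^ (q - p)
        * (Cε * (N : ℝ) ^ (d * p / 2 - K + ε) * (na N i) ^ p)
        = Cε * ((N : ℝ) ^ ((d / 2 - ζ) * (q - p)) * (N : ℝ) ^ (d * p / 2 - K + ε))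
          * ((na N i) ^ (q - p) * (na N i) ^ p) := by ring
    rw [e2, ← Real.rpow_add hN0,
      ← Real.rpow_add_of_nonneg (hna N i) hqp.le hp0.le]
    have e3 : q - p + p = q := by ring
    rw [e3]
    have hexp : (d / 2 - ζ) * (q - p) + (d * p / 2 - K + ε) ≤ d * q / 2 - K := by
      rw [hεdef]; nlinarith
    exact mul_le_mul_of_nonneg_right
      (mul_le_mul_of_nonneg_left
        (Real.rpow_le_rpow_of_exponent_le hN1 hexp) hCε.le)
      (Real.rpow_nonneg (hna N i) q)
  have hb1 := h2 N hN i
  have : (∫ α in box r, ‖F N i α‖ ^ q)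
      ≤ C * (N : ℝ) ^ (d * q / 2 - K) * (na N i) ^ q
        + Cε * (N : ℝ) ^ (d * q / 2 - K) * (na N i) ^ q := by
    rw [← hsplit]
    exact add_le_add hb1 (hb2.trans hb2')
  linarith [this]
end

section
/- (Tomas–Stein inequality for discrete extension operators) Let S ⊂ ℤ^r be finite, a : S → ℂ with ∑_{s∈S}|a(s)|² = 1, and w : ℤ^r → [0,1] with w = 1 on S and finite support S'. Define F_a(α) = ∑_{s∈S} a(s) e(s·α) and F(α) = ∑_{s∈S'} w(s) e(s·α) on 𝕋^r. Then for every λ > 0, with E_λ = {α ∈ 𝕋^r : |F_a(α)| ≥ λ} and g = 1_{E_λ}, one has λ²|E_λ|² ≤ ⟨g ∗ |F|, g⟩ = ∫∫ 1_{E_λ}(α) |F(α−β)| 1_{E_λ}(β) dα dβ. -/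
/-!
Write `χ_s(α) = e(s·α)`, `F_a = ∑_{s ∈ S} a(s) χ_s`, and let `f = F_a / |F_a|` be the phase of
`F_a`. On `E_λ` we have `λ ≤ |F_a| = conj f · F_a`, so
`λ |E_λ| ≤ ∫_{E_λ} conj f · F_a = ∑_{s ∈ S} a(s) c(s)` with `c(s) = ∫_{E_λ} conj f · χ_s`.
Cauchy–Schwarz and `w = 1` on `S` give `λ² |E_λ|² ≤ ∑_{s ∈ S'} w(s) |c(s)|²`, and since
`F(α - β) = ∑_{s ∈ S'} w(s) χ_s(α) conj χ_s(β)`, expanding the square shows that this sum is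
`∫∫_{E_λ × E_λ} conj f(α) f(β) F(α - β)`, which is at most `∫∫_{E_λ × E_λ} |F(α - β)|`.
Only finiteness of the measure and `|χ_s| ≤ 1` enter, so the inequality holds for any finite
measure in place of Lebesgue measure on `E_λ` and any bounded measurable `χ_s`.
-/

open MeasureTheory Finset

/-- `e x = exp(2πix)`. -/
noncomputable def e (x : ℝ) : ℂ := Complex.exp (2 * Real.pi * Complex.I * x)

open ComplexConjugate

@[fun_prop]
lemma continuous_e : Continuous e := by unfold e; fun_prop

lemma norm_e (x : ℝ) : ‖e x‖ = 1 := by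
  rw [e, show 2 * (Real.pi : ℂ) * Complex.I * x = ((2 * Real.pi * x : ℝ) : ℂ) * Complex.I by
    push_cast; ring, Complex.norm_exp_ofReal_mul_I]

lemma e_sub (x y : ℝ) : e (x - y) = e x * conj (e y) := by
  rw [e, e, e, ← Complex.exp_conj, ← Complex.exp_add]
  congr 1
  simp only [map_mul, Complex.conj_I, Complex.conj_ofReal, map_ofNat]
  push_cast; ring

noncomputable def torusChar {r : ℕ} (s : Fin r → ℤ) (α : Fin r → ℝ) : ℂ :=
  e (∑ i, (s i : ℝ) * α i)

lemma continuous_torusChar {r : ℕ} (s : Fin r → ℤ) : Continuous (torusChar s) :=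
  continuous_e.comp (by fun_prop)

lemma norm_torusChar {r : ℕ} (s : Fin r → ℤ) (α : Fin r → ℝ) : ‖torusChar s α‖ = 1 :=
  norm_e _

lemma torusChar_sub {r : ℕ} (s : Fin r → ℤ) (α β : Fin r → ℝ) :
    torusChar s (α - β) = torusChar s α * conj (torusChar s β) := by
  simp only [torusChar, Pi.sub_apply, mul_sub, sum_sub_distrib, e_sub]

lemma norm_sum_mul_sq_le {ι : Type*} (S : Finset ι) (a c : ι → ℂ) :
    ‖∑ s ∈ S, a s * c s‖ ^ 2 ≤ (∑ s ∈ S, ‖a s‖ ^ 2) * ∑ s ∈ S, ‖c s‖ ^ 2 := calc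
  _ ≤ (∑ s ∈ S, ‖a s‖ * ‖c s‖) ^ 2 := by
    gcongr; exact (norm_sum_le _ _).trans_eq (by simp only [norm_mul])
  _ ≤ _ := sum_mul_sq_le_sq_mul_sq S _ _

/-- With the junk value `phase 0 = 0`, `conj (phase z) * z = ‖z‖` holds also at `z = 0`. -/
noncomputable def phase (z : ℂ) : ℂ := z / ‖z‖

@[fun_prop]
lemma measurable_phase : Measurable phase := by unfold phase; fun_prop

lemma norm_phase_le_one (z : ℂ) : ‖phase z‖ ≤ 1 := by
  rw [phase, norm_div, Complex.norm_real, norm_norm]; exact div_self_le_one _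

lemma conj_phase_mul_self (z : ℂ) : conj (phase z) * z = ‖z‖ := by
  rw [phase, map_div₀, Complex.conj_ofReal, div_mul_eq_mul_div, mul_comm, Complex.mul_conj,
    Complex.normSq_eq_norm_sq]
  rcases eq_or_ne z 0 with rfl | hz
  · simp
  · have : (‖z‖ : ℂ) ≠ 0 := by simpa using hz
    push_cast; field_simp

section

variable {X ι : Type*} [MeasurableSpace X] {μ : Measure X}

lemma integral_finsetSum_const_mul (T : Finset ι) (a : ι → ℂ) (g : ι → X → ℂ)
    (h : ∀ s ∈ T, Integrable (g s) μ) :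
    ∫ x, ∑ s ∈ T, a s * g s x ∂μ = ∑ s ∈ T, a s * ∫ x, g s x ∂μ := by
  rw [integral_finsetSum _ fun s hs => (h s hs).const_mul (a s)]
  simp_rw [integral_const_mul]

lemma integral_integral_conj_mul_mul_sum (T : Finset ι) (f : X → ℂ) (w : ι → ℝ)
    (φ : ι → X → ℂ) (h : ∀ s ∈ T, Integrable (fun x => conj (f x) * φ s x) μ) :
    ∫ x, ∫ y, conj (f x) * f y * ∑ s ∈ T, (w s : ℂ) * (φ s x * conj (φ s y)) ∂μ ∂μ
      = ((∑ s ∈ T, w s * ‖∫ x, conj (f x) * φ s x ∂μ‖ ^ 2 : ℝ) : ℂ) := by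
  have hconj (s) (hs : s ∈ T) : Integrable (fun y => conj (conj (f y) * φ s y)) μ :=
    Complex.conjCLE.toContinuousLinearMap.integrable_comp (h s hs)
  have inner (x : X) : ∫ y, conj (f x) * f y * ∑ s ∈ T, (w s : ℂ) * (φ s x * conj (φ s y)) ∂μ
      = ∑ s ∈ T, (w s * (conj (f x) * φ s x)) * conj (∫ y, conj (f y) * φ s y ∂μ) := calc
    _ = ∫ y, ∑ s ∈ T, (w s * (conj (f x) * φ s x)) * conj (conj (f y) * φ s y) ∂μ := by
      simp only [mul_sum, map_mul, Complex.conj_conj]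
      congr! 3; ring
    _ = _ := by
      rw [integral_finsetSum_const_mul T _ _ hconj]; simp_rw [integral_conj]
  simp_rw [inner, mul_right_comm _ _ (conj _)]
  rw [integral_finsetSum_const_mul T _ _ h]
  push_cast
  refine sum_congr rfl fun s _ => ?_
  rw [← Complex.mul_conj']
  ring

lemma norm_integral_integral_le {Y E : Type*} [MeasurableSpace Y] {ν : Measure Y}
    [NormedAddCommGroup E] [NormedSpace ℝ E] {g : X → Y → E} {G : X → Y → ℝ}
    (hG : ∀ x, Integrable (G x) ν) (hG' : Integrable (fun x => ∫ y, G x y ∂ν) μ)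
    (hle : ∀ x y, ‖g x y‖ ≤ G x y) :
    ‖∫ x, ∫ y, g x y ∂ν ∂μ‖ ≤ ∫ x, ∫ y, G x y ∂ν ∂μ :=
  norm_integral_le_of_norm_le hG' <| ae_of_all _ fun x =>
    norm_integral_le_of_norm_le (hG x) (ae_of_all _ (hle x))

variable [IsFiniteMeasure μ]

lemma norm_integral_integral_conj_mul_mul_le {f : X → ℂ} {K : X → X → ℂ} {C : ℝ}
    (hf : ∀ x, ‖f x‖ ≤ 1) (hKm : Measurable (Function.uncurry K)) (hKb : ∀ x y, ‖K x y‖ ≤ C) :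
    ‖∫ x, ∫ y, conj (f x) * f y * K x y ∂μ ∂μ‖ ≤ ∫ x, ∫ y, ‖K x y‖ ∂μ ∂μ := by
  have hKb' (x y : X) : ‖‖K x y‖‖ ≤ C := (norm_norm _).trans_le (hKb x y)
  refine norm_integral_integral_le
    (fun x => .of_bound (hKm.comp measurable_prodMk_left).norm.aestronglyMeasurable _
      (ae_of_all _ (hKb' x)))
    (.of_bound hKm.norm.stronglyMeasurable.integral_prod_right'.aestronglyMeasurable _
      (ae_of_all _ fun x => norm_integral_le_of_norm_le_const (ae_of_all _ (hKb' x))))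
    fun x y => ?_
  rw [norm_mul, norm_mul, RCLike.norm_conj]
  exact mul_le_of_le_one_left (norm_nonneg _) (mul_le_one₀ (hf x) (norm_nonneg _) (hf y))

lemma integrable_conj_phase_mul {g ψ : X → ℂ} {C : ℝ} (hg : Measurable g) (hψ : Measurable ψ)
    (hψb : ∀ x, ‖ψ x‖ ≤ C) : Integrable (fun x => conj (phase (g x)) * ψ x) μ :=
  .of_bound (by fun_prop : Measurable _).aestronglyMeasurable C <| ae_of_all _ fun x => by
    rw [norm_mul, RCLike.norm_conj]
    exact (mul_le_of_le_one_left (norm_nonneg _) (norm_phase_le_one _)).trans (hψb x)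

lemma mul_measureReal_univ_le_norm_sum_mul_integral {S : Finset ι} (a : ι → ℂ)
    {φ : ι → X → ℂ} {lam : ℝ} (hφm : ∀ s, Measurable (φ s)) (hφ : ∀ s x, ‖φ s x‖ ≤ 1)
    (hlarge : ∀ᵐ x ∂μ, lam ≤ ‖∑ s ∈ S, a s * φ s x‖) :
    lam * μ.real Set.univ ≤
      ‖∑ s ∈ S, a s * ∫ x, conj (phase (∑ t ∈ S, a t * φ t x)) * φ s x ∂μ‖ := by
  set Fa : X → ℂ := fun x => ∑ s ∈ S, a s * φ s x
  have hFam : Measurable Fa := by fun_prop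
  have hFab (x : X) : ‖Fa x‖ ≤ ∑ s ∈ S, ‖a s‖ :=
    (norm_sum_le _ _).trans <| sum_le_sum fun s _ => by
      rw [norm_mul]; exact mul_le_of_le_one_right (norm_nonneg _) (hφ s x)
  have hdual : ∫ x, (‖Fa x‖ : ℂ) ∂μ
      = ∑ s ∈ S, a s * ∫ x, conj (phase (Fa x)) * φ s x ∂μ := calc
    _ = ∫ x, ∑ s ∈ S, a s * (conj (phase (Fa x)) * φ s x) ∂μ := by
      simp_rw [← conj_phase_mul_self, Fa, mul_sum, mul_left_comm]
    _ = _ := integral_finsetSum_const_mul S a _ fun s _ =>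
      integrable_conj_phase_mul hFam (hφm s) (hφ s)
  rw [← hdual, integral_complex_ofReal, Complex.norm_real,
    Real.norm_of_nonneg (integral_nonneg fun _ => norm_nonneg _), mul_comm, ← smul_eq_mul,
    ← integral_const]
  exact integral_mono_ae (integrable_const lam)
    (Integrable.of_bound hFam.aestronglyMeasurable _ (ae_of_all _ hFab)).norm hlarge

theorem sq_mul_measureReal_sq_le_integral_integral_norm {S S' : Finset ι} (a : ι → ℂ)
    (w : ι → ℝ) {φ : ι → X → ℂ} {lam : ℝ} (hlam : 0 ≤ lam) (hφm : ∀ s, Measurable (φ s))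
    (hφ : ∀ s x, ‖φ s x‖ ≤ 1) (hSS' : S ⊆ S') (hw0 : ∀ s ∈ S', 0 ≤ w s)
    (hwS : ∀ s ∈ S, 1 ≤ w s) (hlarge : ∀ᵐ x ∂μ, lam ≤ ‖∑ s ∈ S, a s * φ s x‖) :
    lam ^ 2 * μ.real Set.univ ^ 2 ≤ (∑ s ∈ S, ‖a s‖ ^ 2) *
      ∫ x, ∫ y, ‖∑ s ∈ S', (w s : ℂ) * (φ s x * conj (φ s y))‖ ∂μ ∂μ := by
  set f : X → ℂ := fun x => phase (∑ t ∈ S, a t * φ t x)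
  set c : ι → ℂ := fun s => ∫ x, conj (f x) * φ s x ∂μ
  have hKb (x y : X) : ‖∑ s ∈ S', (w s : ℂ) * (φ s x * conj (φ s y))‖ ≤ ∑ s ∈ S', ‖(w s : ℂ)‖ :=
    (norm_sum_le _ _).trans <| sum_le_sum fun s _ => by
      rw [norm_mul, norm_mul, RCLike.norm_conj]
      exact mul_le_of_le_one_right (norm_nonneg _) (mul_le_one₀ (hφ s x) (norm_nonneg _) (hφ s y))
  calc lam ^ 2 * μ.real Set.univ ^ 2 = (lam * μ.real Set.univ) ^ 2 := by ring
    _ ≤ ‖∑ s ∈ S, a s * c s‖ ^ 2 := by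
      gcongr; exact mul_measureReal_univ_le_norm_sum_mul_integral a hφm hφ hlarge
    _ ≤ (∑ s ∈ S, ‖a s‖ ^ 2) * ∑ s ∈ S, ‖c s‖ ^ 2 := norm_sum_mul_sq_le S a c
    _ ≤ (∑ s ∈ S, ‖a s‖ ^ 2) * ∑ s ∈ S', w s * ‖c s‖ ^ 2 := by
      gcongr
      calc ∑ s ∈ S, ‖c s‖ ^ 2 ≤ ∑ s ∈ S, w s * ‖c s‖ ^ 2 :=
            sum_le_sum fun s hs => le_mul_of_one_le_left (sq_nonneg _) (hwS s hs)
        _ ≤ _ := sum_le_sum_of_subset_of_nonneg hSS' fun s hs _ =>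
            mul_nonneg (hw0 s hs) (sq_nonneg _)
    _ = (∑ s ∈ S, ‖a s‖ ^ 2) * ‖∫ x, ∫ y, conj (f x) * f y *
          ∑ s ∈ S', (w s : ℂ) * (φ s x * conj (φ s y)) ∂μ ∂μ‖ := by
      rw [integral_integral_conj_mul_mul_sum S' f w φ fun s _ =>
          integrable_conj_phase_mul (by fun_prop) (hφm s) (hφ s), Complex.norm_real,
        Real.norm_of_nonneg (sum_nonneg fun s hs => mul_nonneg (hw0 s hs) (sq_nonneg _))]
    _ ≤ _ := by
      gcongr
      exact norm_integral_integral_conj_mul_mul_le (fun x => norm_phase_le_one _)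
        (by unfold Function.uncurry; fun_prop) hKb

end

theorem stmt18_general (r : ℕ) (S S' : Finset (Fin r → ℤ))
    (a : (Fin r → ℤ) → ℂ) (w : (Fin r → ℤ) → ℝ)
    (ha : ∑ s ∈ S, ‖a s‖ ^ 2 = 1)
    (hw0 : ∀ s, 0 ≤ w s)
    (hwS : ∀ s ∈ S, w s = 1) (hwS' : ∀ s, s ∉ S' → w s = 0)
    (lam : ℝ) (hlam : 0 < lam) :
    let Fa : (Fin r → ℝ) → ℂ := fun α => ∑ s ∈ S, a s * e (∑ i, (s i : ℝ) * α i)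
    let F : (Fin r → ℝ) → ℂ := fun α => ∑ s ∈ S', (w s : ℂ) * e (∑ i, (s i : ℝ) * α i)
    let E : Set (Fin r → ℝ) := {α | (∀ i, α i ∈ Set.Ico (0 : ℝ) 1) ∧ lam ≤ ‖Fa α‖}
    lam ^ 2 * ((volume E).toReal) ^ 2 ≤ ∫ α in E, ∫ β in E, ‖F (α - β)‖ := by
  intro Fa F E
  have hFa : Continuous Fa := continuous_finsetSum _ fun s _ => by fun_prop
  have hE : MeasurableSet E := by
    have : E = Set.univ.pi (fun _ => Set.Ico 0 1) ∩ {α | lam ≤ ‖Fa α‖} := by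
      ext; simp [E, Set.mem_pi]
    rw [this]
    exact (MeasurableSet.univ_pi fun _ => measurableSet_Ico).inter
      (measurableSet_le measurable_const hFa.norm.measurable)
  have : IsFiniteMeasure (volume.restrict E) :=
    isFiniteMeasure_restrict.2 <| measure_ne_top_of_subset (μ := volume)
      (s := Set.univ.pi fun _ => Set.Ico 0 1) (fun α hα i _ => hα.1 i)
      (by simp [volume_pi_pi])
  have hSS' : S ⊆ S' := fun s hs => by
    by_contra hs'; simpa [hwS s hs] using hwS' s hs'
  have hF (α β : Fin r → ℝ) :
      F (α - β) = ∑ s ∈ S', (w s : ℂ) * (torusChar s α * conj (torusChar s β)) := by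
    simp only [← torusChar_sub]; rfl
  have key := sq_mul_measureReal_sq_le_integral_integral_norm (μ := volume.restrict E) a w
    hlam.le (fun s => (continuous_torusChar s).measurable) (fun s α => (norm_torusChar s α).le)
    hSS' (fun s _ => hw0 s) (fun s hs => (hwS s hs).ge)
    ((ae_restrict_iff' hE).2 (ae_of_all _ fun α hα => hα.2))
  rw [ha, one_mul, measureReal_restrict_apply_univ] at key
  simp_rw [hF]
  exact key

/-- the Tomas–Stein inequality for discrete extension operators:
`λ²|E_λ|² ≤ ⟨g ∗ |F|, g⟩`. -/
theorem stmt18 (r : ℕ) (S S' : Finset (Fin r → ℤ))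
    (a : (Fin r → ℤ) → ℂ) (w : (Fin r → ℤ) → ℝ)
    (ha : ∑ s ∈ S, ‖a s‖ ^ 2 = 1)
    (hw0 : ∀ s, 0 ≤ w s) (hw1 : ∀ s, w s ≤ 1)
    (hwS : ∀ s ∈ S, w s = 1) (hwS' : ∀ s, s ∉ S' → w s = 0)
    (lam : ℝ) (hlam : 0 < lam) :
    let Fa : (Fin r → ℝ) → ℂ := fun α => ∑ s ∈ S, a s * e (∑ i, (s i : ℝ) * α i)
    let F : (Fin r → ℝ) → ℂ := fun α => ∑ s ∈ S', (w s : ℂ) * e (∑ i, (s i : ℝ) * α i)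
    let E : Set (Fin r → ℝ) := {α | (∀ i, α i ∈ Set.Ico (0 : ℝ) 1) ∧ lam ≤ ‖Fa α‖}
    lam ^ 2 * ((volume E).toReal) ^ 2 ≤ ∫ α in E, ∫ β in E, ‖F (α - β)‖ :=
  stmt18_general r S S' a w ha hw0 hwS hwS' lam hlam
end
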